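/- arXiv:2410.10697 — 2 statements merged into one kernel-verified Lean document; each statement's English description precedes it below -/
import Mathlib

section
/- Fix b ∈ ℂ with b ≠ 0, and for z ∈ ℂ let D_z = {(2b²z·h, b·h) : h ∈ ℂ} ⊆ ℂ² be the image of the (real) derivative of the local-model curve u_b at z. Then the real span D_z + ({0}×ℂ) equals all of ℂ² if and only if z ≠ 0. Consequently, for a ∈ ℂ with a ≠ 0, the image of u_b meets the plane {(z₁,z₂) : z₁ = a} transversely at every intersection point, except that when b² = −a the point u_b(0) = (a, 0) is the unique point of im(u_b) ∩ {z₁ = a} at which D_z + ({0}×ℂ) is a proper subspace of ℂ². (Lemma 4.12: the unique non-transverse intersection of the foliation with the vertebra near an exotic fiber occurs at the fiber with c = −a.) -/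
open Pointwise

lemma uCurve_key (b : ℂ) (hb : b ≠ 0) (z : ℂ) :
    ({p : ℂ × ℂ | ∃ h : ℂ, p = (2 * b ^ 2 * z * h, b * h)} +
        (({0} : Set ℂ) ×ˢ (Set.univ : Set ℂ)) = Set.univ) ↔ z ≠ 0 := by
  constructor
  · intro h hz
    subst hz
    have h1 : ((1 : ℂ), (0 : ℂ)) ∈ (Set.univ : Set (ℂ × ℂ)) := trivial
    rw [← h] at h1
    rcases h1 with ⟨p, hp, q, hq, hpq⟩
    rcases hp with ⟨t, rfl⟩
    rcases hq with ⟨hq1, -⟩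
    have : (1 : ℂ) = 2 * b ^ 2 * 0 * t + q.1 := congrArg Prod.fst hpq.symm
    simp [Set.mem_singleton_iff.mp hq1] at this
  · intro hz
    ext ⟨w1, w2⟩
    simp only [Set.mem_univ, iff_true, Set.mem_add]
    refine ⟨(w1, b * (w1 / (2 * b ^ 2 * z))), ⟨w1 / (2 * b ^ 2 * z), ?_⟩,
      (0, w2 - b * (w1 / (2 * b ^ 2 * z))), ⟨rfl, trivial⟩, ?_⟩
    · have h2 : 2 * b ^ 2 * z ≠ 0 := by
        simp [hz, hb, pow_eq_zero_iff]
      field_simp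
    · simp

/-- Lemma 4.12 (transversality): with `D_z = {(2b²z·h, b·h) : h ∈ ℂ}` the image
of the derivative of `u_b(z) = (b²(z²−1), bz)` at `z`, one has
`D_z + ({0}×ℂ) = ℂ²` iff `z ≠ 0`; consequently for `a ≠ 0` the image of `u_b`
meets the plane `{z₁ = a}` transversely at every intersection point except that
when `b² = −a` the point `u_b(0) = (a,0)` is the unique non-transverse
intersection. -/
theorem uCurve_transversality (b : ℂ) (hb : b ≠ 0) :
    (∀ z : ℂ,
      ({p : ℂ × ℂ | ∃ h : ℂ, p = (2 * b ^ 2 * z * h, b * h)} +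
          (({0} : Set ℂ) ×ˢ (Set.univ : Set ℂ)) = Set.univ) ↔ z ≠ 0) ∧
    (∀ a : ℂ, a ≠ 0 → ∀ z : ℂ, b ^ 2 * (z ^ 2 - 1) = a →
      (({p : ℂ × ℂ | ∃ h : ℂ, p = (2 * b ^ 2 * z * h, b * h)} +
          (({0} : Set ℂ) ×ˢ (Set.univ : Set ℂ)) ≠ Set.univ) ↔
        (b ^ 2 = -a ∧ z = 0))) ∧
    (∀ a : ℂ, b ^ 2 = -a →
      ((b ^ 2 * ((0 : ℂ) ^ 2 - 1), b * 0) : ℂ × ℂ) = (a, 0)) := by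
  refine ⟨uCurve_key b hb, ?_, ?_⟩
  · intro a ha z hza
    rw [Ne, uCurve_key b hb z, not_not]
    constructor
    · intro hz0
      subst hz0
      simp only [ne_eq, zero_pow, OfNat.ofNat_ne_zero, not_false_iff] at hza
      constructor
      · linear_combination -hza
      · rfl
    · exact fun h => h.2
  · intro a ha
    simp only [Prod.mk.injEq]
    constructor
    · linear_combination -ha
    · ring
end

section
/- Let p ∈ ℂ[X] be a nonzero polynomial with p(c) ≠ 0 for every c ∈ ℂ∖{0}. Suppose that for every z₁ ∈ ℂ∖{0} and every z₂ ∈ ℂ there is at most one c ∈ ℂ∖{0} satisfying p(c)·z₂² − p(c)·c − z₁·c = 0. Then there exists λ ∈ ℂ∖{0} such that p = λ·X, i.e. p(c) = λc for all c. (This is the algebraic rigidity step in Step 3 of the proof of Proposition 4.9, forcing the normalizing function α(c) in the local model of the foliation near an exotic fiber to be a nonzero multiple of c.) -/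
/-- Algebraic rigidity step in Step 3 of the proof of Proposition 4.9: if a
nonzero polynomial `p` is nonvanishing on `ℂ∖{0}` and for all `z₁ ≠ 0`, `z₂`
the equation `p(c)·z₂² − p(c)·c − z₁·c = 0` has at most one solution
`c ∈ ℂ∖{0}`, then `p = λ·X` for some `λ ≠ 0`. -/
theorem normalizing_polynomial_linear (p : Polynomial ℂ) (hp : p ≠ 0)
    (hnv : ∀ c : ℂ, c ≠ 0 → Polynomial.eval c p ≠ 0)
    (huniq : ∀ z₁ z₂ : ℂ, z₁ ≠ 0 →
      Set.Subsingleton {c : ℂ | c ≠ 0 ∧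
        Polynomial.eval c p * z₂ ^ 2 - Polynomial.eval c p * c - z₁ * c = 0}) :
    ∃ lam : ℂ, lam ≠ 0 ∧ p = Polynomial.C lam * Polynomial.X := by
  classical
  have hsplit : p.roots.card = p.natDegree :=
    (Polynomial.splits_iff_card_roots).mp (IsAlgClosed.splits p)
  have hroots : ∀ r ∈ p.roots, r = 0 := by
    intro r hr
    by_contra h
    exact hnv r h (Polynomial.isRoot_of_mem_roots hr)
  set n := p.natDegree with hn
  set lam := p.leadingCoeff with hlam
  have hlamne : lam ≠ 0 := Polynomial.leadingCoeff_ne_zero.mpr hp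
  have hpeq : p = Polynomial.C lam * Polynomial.X ^ n := by
    have h1 := Polynomial.C_leadingCoeff_mul_prod_multiset_X_sub_C hsplit
    have h2 : p.roots.map (fun a => Polynomial.X - Polynomial.C a)
        = Multiset.replicate n Polynomial.X := by
      rw [Multiset.eq_replicate]
      constructor
      · rw [Multiset.card_map, hsplit]
      · intro b hb
        obtain ⟨r, hr, rfl⟩ := Multiset.mem_map.mp hb
        rw [hroots r hr]; simp
    rw [h2, Multiset.prod_replicate] at h1
    exact h1.symm
  have heval : ∀ c : ℂ, p.eval c = lam * c ^ n := by
    intro c; rw [hpeq]; simp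
  have hne1 : n ≠ 0 := by
    intro h0
    have h1 : (1 : ℂ) ∈ {c : ℂ | c ≠ 0 ∧
        Polynomial.eval c p * (0:ℂ) ^ 2 - Polynomial.eval c p * c - (-lam) * c = 0} := by
      constructor
      · norm_num
      · rw [heval, h0]; ring
    have h2 : (2 : ℂ) ∈ {c : ℂ | c ≠ 0 ∧
        Polynomial.eval c p * (0:ℂ) ^ 2 - Polynomial.eval c p * c - (-lam) * c = 0} := by
      constructor
      · norm_num
      · rw [heval, h0]; ring
    have := huniq (-lam) 0 (neg_ne_zero.mpr hlamne) h1 h2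
    norm_num at this
  have hle1 : n ≤ 1 := by
    by_contra h
    push_neg at h
    set ζ : ℂ := Complex.exp (2 * Real.pi * Complex.I / n) with hζ
    have hprim : IsPrimitiveRoot ζ n := Complex.isPrimitiveRoot_exp n hne1
    have hζn : ζ ^ n = 1 := hprim.pow_eq_one
    have hζne0 : ζ ≠ 0 := by
      intro h0
      rw [h0, zero_pow hne1] at hζn
      exact zero_ne_one hζn
    have hζne1 : ζ ≠ 1 := by
      intro h1
      have := hprim.dvd_of_pow_eq_one 1 (by rw [h1, one_pow])
      have := Nat.le_of_dvd one_pos this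
      omega
    have h1 : (1 : ℂ) ∈ {c : ℂ | c ≠ 0 ∧
        Polynomial.eval c p * (0:ℂ) ^ 2 - Polynomial.eval c p * c - (-lam) * c = 0} := by
      constructor
      · norm_num
      · rw [heval]; ring
    have h2 : ζ ∈ {c : ℂ | c ≠ 0 ∧
        Polynomial.eval c p * (0:ℂ) ^ 2 - Polynomial.eval c p * c - (-lam) * c = 0} := by
      constructor
      · exact hζne0
      · rw [heval]
        have : ζ ^ n * ζ = ζ := by rw [hζn, one_mul]
        calc lam * ζ ^ n * (0:ℂ) ^ 2 - lam * ζ ^ n * ζ - -lam * ζ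
            = lam * ζ - lam * (ζ ^ n * ζ) := by ring
          _ = 0 := by rw [this]; ring
    have := huniq (-lam) 0 (neg_ne_zero.mpr hlamne) h1 h2
    exact hζne1 this.symm
  have hn1 : n = 1 := le_antisymm hle1 (Nat.one_le_iff_ne_zero.mpr hne1)
  exact ⟨lam, hlamne, by rw [hpeq, hn1, pow_one]⟩
end
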